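/- Let ε : W₁ → {±1} be the restriction to W₁ ≤ S_d of the sign character of S_d. Then N(Z(ε;p₁,…,p_d) ∗ Z(1_{W₂};p₁,…,p_d) ∗ ⋯ ∗ Z(1_{W_k};p₁,…,p_d)) equals the number of S_d-orbits on I₁×⋯×I_k whose stabilizer ω₁W₁ω₁⁻¹ ∩ ⋯ ∩ ω_kW_kω_k⁻¹ consists entirely of even permutations. -/

import Mathlib

open scoped Classical
open MvPolynomial

/-- The number `c_s(σ)` of cycles of length `s` in the cycle decomposition of `σ`
(fixed points counted as cycles of length 1). -/
def cyc {d : ℕ} (σ : Equiv.Perm (Fin d)) (s : ℕ) : ℕ :=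
  if s = 1 then d - σ.support.card else σ.cycleType.count s

/-- The monomial `p₁^{c₁(σ)} ⋯ p_d^{c_d(σ)}`, where the variable `X s` stands for the
power sum `p_{s+1}`. -/
noncomputable def cycMon {d : ℕ} (K : Type*) [Field K] (σ : Equiv.Perm (Fin d)) :
    MvPolynomial (Fin d) K :=
  ∏ s : Fin d, (X s : MvPolynomial (Fin d) K) ^ cyc σ ((s : ℕ) + 1)

/-- The characteristic map: `ch u = |S_d|⁻¹ Σ_ζ u(ζ) p₁^{c₁(ζ)}⋯p_d^{c_d(ζ)}`. -/
noncomputable def ch {d : ℕ} (K : Type*) [Field K] (u : Equiv.Perm (Fin d) → K) :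
    MvPolynomial (Fin d) K :=
  (Nat.card (Equiv.Perm (Fin d)) : K)⁻¹ • ∑ ζ : Equiv.Perm (Fin d), u ζ • cycMon K ζ

/-- The character of the induced representation `ind_W^{S_d}(χ)`. -/
noncomputable def indChar {d : ℕ} (K : Type*) [Field K]
    (W : Subgroup (Equiv.Perm (Fin d))) (χ : W →* Kˣ) : Equiv.Perm (Fin d) → K :=
  fun ζ => (Nat.card W : K)⁻¹ * ∑ g : Equiv.Perm (Fin d),
    if h : g⁻¹ * ζ * g ∈ W then (χ ⟨g⁻¹ * ζ * g, h⟩ : K) else 0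

/-- The generalized cycle index `Z(χ; p₁,…,p_d)`; it equals `ch (indChar χ)`. -/
noncomputable def Zind {d : ℕ} (K : Type*) [Field K]
    (W : Subgroup (Equiv.Perm (Fin d))) (χ : W →* Kˣ) : MvPolynomial (Fin d) K :=
  (Nat.card W : K)⁻¹ • ∑ σ : W, (χ σ : K) • cycMon K (σ : Equiv.Perm (Fin d))

/-- `z_σ = ∏_{s=1}^d s^{c_s(σ)} c_s(σ)!`. -/
def zval {d : ℕ} (σ : Equiv.Perm (Fin d)) : ℕ :=
  ∏ s ∈ Finset.Icc 1 d, s ^ (cyc σ s) * (cyc σ s).factorial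

def IsLeftTransversal {G : Type*} [Group G] (W : Subgroup G) (I : Set G) : Prop :=
  ∀ g : G, ∃! i : I, (i : G)⁻¹ * g ∈ W

/-!
Evaluating at `p = 1` turns `N(ch u)` into the average of `u`. Each induced character of a
class function `f` equals `f` times the number of fixed points on the transversal, so the
product of the `k` induced characters is `sgn ζ · #Fix(ζ, I₁ × ⋯ × I_k)`. A signed Burnside
count finishes: summing a linear character over a stabilizer gives its order or `0` according
as the character is trivial there, and by orbit–stabilizer every orbit on which `sgn` is
trivial contributes exactly `|S_d|`.
-/

open Finset MulAction

section SignedBurnside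

variable {G P R : Type*} [Group G] [MulAction G P] [CommRing R]

lemma sum_fixing_smul_eq [Fintype G] [DecidableEq P] (χ : G →* Rˣ) (g : G) (p : P) :
    ∑ h ∈ univ.filter (fun h : G => h • g • p = g • p), (χ h : R) =
      ∑ h ∈ univ.filter (fun h : G => h • p = p), (χ h : R) := by
  refine sum_nbij' (fun h => g⁻¹ * h * g) (fun h => g * h * g⁻¹) ?_ ?_ ?_ ?_ ?_
  · intro h hh
    simp only [mem_filter, mem_univ, true_and] at hh ⊢
    rw [mul_smul, mul_smul, hh, inv_smul_smul]
  · intro h hh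
    simp only [mem_filter, mem_univ, true_and] at hh ⊢
    rw [mul_smul, mul_smul, inv_smul_smul, hh]
  · intro h _; group
  · intro h _; group
  · intro h _
    simp [mul_comm]

lemma sum_fixing_eq_ite [Fintype G] [DecidableEq P] [IsDomain R] (χ : G →* Rˣ) (p : P) :
    ∑ h ∈ univ.filter (fun h : G => h • p = p), (χ h : R) =
      if ∀ h ∈ stabilizer G p, χ h = 1 then (Fintype.card (stabilizer G p) : R) else 0 := by
  rw [sum_subtype (p := (· ∈ stabilizer G p)) _ (fun h => by simp [mem_stabilizer_iff])]
  refine (sum_hom_units ((Units.coeHom R).comp (χ.comp (stabilizer G p).subtype))).trans ?_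
  rw [apply_ite (Nat.cast : ℕ → R), Nat.cast_zero]
  congr 1
  simp [DFunLike.ext_iff]

lemma sum_eq_sum_orbit_reps [Fintype P] {M : Type*} [AddCommMonoid M] (F : P → M)
    (hF : ∀ (g : G) p, F (g • p) = F p) (T : Finset P)
    (hT : ∀ p, ∃! ω, ω ∈ T ∧ ∃ g : G, g • ω = p) :
    ∑ p, F p = ∑ ω ∈ T, Fintype.card (orbit G ω) • F ω := by
  have hsplit : ∀ p, F p = ∑ ω ∈ T, if p ∈ orbit G ω then F ω else 0 := by
    intro p
    obtain ⟨ω₀, ⟨hω₀, g, rfl⟩, huniq⟩ := hT p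
    rw [sum_eq_single_of_mem ω₀ hω₀, if_pos (mem_orbit ω₀ g), hF]
    exact fun ω hω hne => if_neg fun hmem => hne (huniq ω ⟨hω, mem_orbit_iff.mp hmem⟩)
  rw [sum_congr rfl fun p _ => hsplit p, sum_comm]
  refine sum_congr rfl fun ω _ => ?_
  rw [sum_ite, sum_const_zero, add_zero, sum_const, Fintype.card_subtype]

theorem sum_char_mul_card_fixed_eq [Fintype G] [Fintype P] [DecidableEq P] [IsDomain R]
    (χ : G →* Rˣ) (T : Finset P) (hT : ∀ p, ∃! ω, ω ∈ T ∧ ∃ g : G, g • ω = p) :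
    ∑ g, (χ g : R) * #(univ.filter fun p : P => g • p = p) =
      Fintype.card G * #(T.filter fun ω => ∀ g ∈ stabilizer G ω, χ g = 1) := by
  calc ∑ g, (χ g : R) * #(univ.filter fun p : P => g • p = p)
      = ∑ p : P, ∑ g ∈ univ.filter (fun g : G => g • p = p), (χ g : R) := by
        simp only [card_filter, Nat.cast_sum, mul_sum, sum_filter]
        rw [sum_comm]
        simp
    _ = ∑ ω ∈ T, Fintype.card (orbit G ω) •
          ∑ g ∈ univ.filter (fun g : G => g • ω = ω), (χ g : R) :=
        sum_eq_sum_orbit_reps _ (sum_fixing_smul_eq χ) T hT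
    _ = ∑ ω ∈ T, if ∀ g ∈ stabilizer G ω, χ g = 1 then (Fintype.card G : R) else 0 := by
        refine sum_congr rfl fun ω _ => ?_
        rw [sum_fixing_eq_ite, smul_ite, smul_zero, nsmul_eq_mul, ← Nat.cast_mul,
          card_orbit_mul_card_stabilizer_eq_card_group]
    _ = Fintype.card G * #(T.filter fun ω => ∀ g ∈ stabilizer G ω, χ g = 1) := by
        rw [← sum_filter, sum_const, nsmul_eq_mul, mul_comm]

end SignedBurnside

section Transversal

variable {G : Type*} [Group G] {W : Subgroup G} {I : Set G}

lemma Subgroup.mem_map_conj_iff {g ζ : G} :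
    ζ ∈ W.map (MulAut.conj g).toMonoidHom ↔ g⁻¹ * ζ * g ∈ W := by
  rw [Subgroup.mem_map_equiv, MulAut.conj_symm_apply]

lemma IsLeftTransversal.isComplement (hI : IsLeftTransversal W I) :
    Subgroup.IsComplement I W :=
  Subgroup.isComplement_iff_existsUnique_inv_mul_mem.mpr hI

lemma IsLeftTransversal.stabilizer_eq_map_conj [MulAction G I] (hI : IsLeftTransversal W I)
    (hs : ∀ (ζ : G) (i : I), ((ζ • i : I) : G)⁻¹ * ζ * i ∈ W) (i : I) :
    stabilizer G i = W.map (MulAut.conj (i : G)).toMonoidHom := by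
  ext ζ
  rw [mem_stabilizer_iff, Subgroup.mem_map_conj_iff]
  refine ⟨fun h => by simpa only [h] using hs ζ i, fun h => ?_⟩
  obtain ⟨j, -, huniq⟩ := hI (ζ * i)
  simp only [← mul_assoc] at huniq
  exact (huniq _ (hs ζ i)).trans (huniq _ h).symm

lemma Subgroup.IsComplement.card_filter_conj_mem [Fintype G] (hI : Subgroup.IsComplement I W)
    (ζ : G) :
    #(univ.filter fun g : G => g⁻¹ * ζ * g ∈ W) =
      Nat.card W * #(univ.filter fun i : I => (i : G)⁻¹ * ζ * i ∈ W) := by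
  have hconj : ∀ (i : I) (w : (W : Set G)),
      ((i : G) * w)⁻¹ * ζ * (i * w) ∈ W ↔ (i : G)⁻¹ * ζ * i ∈ W := by
    rintro i ⟨w, hw⟩
    rw [show ((i : G) * w)⁻¹ * ζ * (i * w) = w⁻¹ * ((i : G)⁻¹ * ζ * i) * w by group,
      W.mul_mem_cancel_right hw, W.mul_mem_cancel_left (W.inv_mem hw)]
  simp only [card_filter]
  rw [← Fintype.sum_equiv hI.equiv.symm _ _ fun _ => rfl, Fintype.sum_prod_type]
  simp only [Subgroup.IsComplement.equiv_symm_apply, hconj, sum_const, card_univ,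
    Nat.card_eq_fintype_card, mul_sum, mul_ite, smul_eq_mul, mul_one, mul_zero]
  rfl

end Transversal

section PiAction

variable {G ι : Type*} [Group G] {X : ι → Type*} [∀ i, MulAction G (X i)]

lemma stabilizer_pi (x : ∀ i, X i) : stabilizer G x = ⨅ i, stabilizer G (x i) := by
  ext g
  simp [funext_iff]

lemma card_filter_smul_pi_eq_prod [Fintype ι] [DecidableEq ι] [∀ i, Fintype (X i)]
    [∀ i, DecidableEq (X i)] (g : G) :
    #(univ.filter fun x : (∀ i, X i) => g • x = x) =
      ∏ i, #(univ.filter fun y : X i => g • y = y) := by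
  rw [← Fintype.card_piFinset]
  congr 1
  ext x
  simp [funext_iff]

end PiAction

open Equiv

lemma eval_one_ch {d : ℕ} {K : Type*} [Field K] (u : Perm (Fin d) → K) :
    eval (fun _ => (1 : K)) (ch K u) = (Nat.card (Perm (Fin d)) : K)⁻¹ * ∑ ζ, u ζ := by
  simp [ch, cycMon, smul_eval]

lemma indChar_eq_mul_card_fixed {d : ℕ} {K : Type*} [Field K] [CharZero K]
    {W : Subgroup (Perm (Fin d))} {I : Set (Perm (Fin d))} [MulAction (Perm (Fin d)) I]
    (hI : IsLeftTransversal W I)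
    (hs : ∀ (ζ : Perm (Fin d)) (i : I), ((ζ • i : I) : Perm (Fin d))⁻¹ * ζ * i ∈ W)
    {χ : W →* Kˣ} (f : Perm (Fin d) → K) (hf : ∀ g ζ, f (g⁻¹ * ζ * g) = f ζ)
    (hχ : ∀ w : W, (χ w : K) = f w) (ζ : Perm (Fin d)) :
    indChar K W χ ζ = f ζ * #(univ.filter fun i : I => ζ • i = i) := by
  have hterm : ∀ g : Perm (Fin d),
      (if h : g⁻¹ * ζ * g ∈ W then (χ ⟨_, h⟩ : K) else 0) =
        if g⁻¹ * ζ * g ∈ W then f ζ else 0 := fun g => by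
    split_ifs with h
    · rw [hχ, hf]
    · rfl
  have hfixed : ∀ i : I, ζ • i = i ↔ (i : Perm (Fin d))⁻¹ * ζ * i ∈ W := fun i => by
    rw [← mem_stabilizer_iff, hI.stabilizer_eq_map_conj hs, Subgroup.mem_map_conj_iff]
  have hW : (Nat.card W : K) ≠ 0 := Nat.cast_ne_zero.mpr Nat.card_pos.ne'
  rw [indChar, sum_congr rfl fun g _ => hterm g, ← sum_filter, sum_const, nsmul_eq_mul,
    hI.isComplement.card_filter_conj_mem, Nat.cast_mul, filter_congr fun i _ => hfixed i]
  field_simp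

theorem stmt18_general (d k : ℕ) (hk : 0 < k) (K : Type*) [Field K] [CharZero K]
    (W : Fin k → Subgroup (Equiv.Perm (Fin d))) (χ : ∀ m, W m →* Kˣ)
    (hsgn : ∀ w : W ⟨0, hk⟩, (χ ⟨0, hk⟩ w : K) =
      ((Equiv.Perm.sign ((w : Equiv.Perm (Fin d))) : ℤ) : K))
    (htriv : ∀ m : Fin k, m ≠ ⟨0, hk⟩ → χ m = 1)
    (I : Fin k → Set (Equiv.Perm (Fin d))) (hI : ∀ m, IsLeftTransversal (W m) (I m))
    (s : ∀ m, Equiv.Perm (Fin d) →* Equiv.Perm (I m))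
    (hs : ∀ m (ζ : Equiv.Perm (Fin d)) (i : I m),
      ((s m ζ i : Equiv.Perm (Fin d)))⁻¹ * ζ * i ∈ W m)
    (T : Finset (∀ m, I m))
    (hT : ∀ i : ∀ m, I m, ∃! ω, ω ∈ T ∧ ∃ ζ : Equiv.Perm (Fin d), ∀ m, s m ζ (ω m) = i m) :
    MvPolynomial.eval (fun _ => (1 : K))
        (ch K (fun ζ => ∏ m, indChar K (W m) (χ m) ζ)) =
      ((T.filter (fun ω =>
        ∀ ζ ∈ ⨅ m, (W m).map (MulAut.conj ((ω m : Equiv.Perm (Fin d)))).toMonoidHom,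
          Equiv.Perm.sign ζ = 1)).card : K) := by
  let _ : ∀ m, MulAction (Perm (Fin d)) (I m) := fun m => MulAction.compHom _ (s m)
  set ε : Perm (Fin d) →* Kˣ := (Units.map (Int.castRingHom K : ℤ →* K)).comp Perm.sign
  have hε (ζ : Perm (Fin d)) : ε ζ = 1 ↔ Perm.sign ζ = 1 :=
    (Units.map_injective (f := (Int.castRingHom K : ℤ →* K)) Int.cast_injective).eq_iff'
      (map_one _)
  have hind (m) (ζ : Perm (Fin d)) : indChar K (W m) (χ m) ζ =
      (if m = ⟨0, hk⟩ then (ε ζ : K) else 1) *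
        #(univ.filter fun i : I m => ζ • i = i) := by
    refine indChar_eq_mul_card_fixed (hI m) (hs m)
      (fun ζ => if m = ⟨0, hk⟩ then (ε ζ : K) else 1) (fun g ζ => by simp [mul_comm])
      (fun w => ?_) ζ
    split_ifs with hm
    · subst hm
      exact hsgn w
    · simp [htriv m hm]
  have hprod (ζ : Perm (Fin d)) : ∏ m, indChar K (W m) (χ m) ζ =
      ε ζ * #(univ.filter fun ω : (∀ m, I m) => ζ • ω = ω) := by
    rw [card_filter_smul_pi_eq_prod, Nat.cast_prod, prod_congr rfl fun m _ => hind m ζ,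
      prod_mul_distrib, prod_ite_eq' univ, if_pos (mem_univ _)]
  have hstab (ω : ∀ m, I m) : stabilizer (Perm (Fin d)) ω =
      ⨅ m, (W m).map (MulAut.conj (ω m : Perm (Fin d))).toMonoidHom :=
    (stabilizer_pi ω).trans (iInf_congr fun m => (hI m).stabilizer_eq_map_conj (hs m) (ω m))
  have hT' (p : ∀ m, I m) : ∃! ω, ω ∈ T ∧ ∃ ζ : Perm (Fin d), ζ • ω = p := by
    simp only [_root_.funext_iff]
    exact hT p
  rw [eval_one_ch, sum_congr rfl fun ζ _ => hprod ζ, sum_char_mul_card_fixed_eq ε T hT',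
    Nat.card_eq_fintype_card, inv_mul_cancel_left₀ (Nat.cast_ne_zero.mpr Fintype.card_ne_zero)]
  simp only [hstab, hε]

/-- if `ε : W₁ → {±1}` is the restriction of the sign character of `S_d`,
then `N(Z(ε)∗Z(1_{W₂})∗⋯∗Z(1_{W_k}))` equals the number of `S_d`-orbits on `I₁×⋯×I_k`
whose stabilizer `ω₁W₁ω₁⁻¹ ∩ ⋯ ∩ ω_kW_kω_k⁻¹` consists of even permutations. -/
theorem stmt18 (d k : ℕ) (hk : 0 < k) (K : Type*) [Field K] [IsAlgClosed K] [CharZero K]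
    (W : Fin k → Subgroup (Equiv.Perm (Fin d))) (χ : ∀ m, W m →* Kˣ)
    (hsgn : ∀ w : W ⟨0, hk⟩, (χ ⟨0, hk⟩ w : K) =
      ((Equiv.Perm.sign ((w : Equiv.Perm (Fin d))) : ℤ) : K))
    (htriv : ∀ m : Fin k, m ≠ ⟨0, hk⟩ → χ m = 1)
    (I : Fin k → Set (Equiv.Perm (Fin d))) (hI : ∀ m, IsLeftTransversal (W m) (I m))
    (s : ∀ m, Equiv.Perm (Fin d) →* Equiv.Perm (I m))
    (hs : ∀ m (ζ : Equiv.Perm (Fin d)) (i : I m),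
      ((s m ζ i : Equiv.Perm (Fin d)))⁻¹ * ζ * i ∈ W m)
    (T : Finset (∀ m, I m))
    (hT : ∀ i : ∀ m, I m, ∃! ω, ω ∈ T ∧ ∃ ζ : Equiv.Perm (Fin d), ∀ m, s m ζ (ω m) = i m) :
    MvPolynomial.eval (fun _ => (1 : K))
        (ch K (fun ζ => ∏ m, indChar K (W m) (χ m) ζ)) =
      ((T.filter (fun ω =>
        ∀ ζ ∈ ⨅ m, (W m).map (MulAut.conj ((ω m : Equiv.Perm (Fin d)))).toMonoidHom,
          Equiv.Perm.sign ζ = 1)).card : K) :=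
  stmt18_general d k hk K W χ hsgn htriv I hI s hs T hT
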